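/- arXiv:2006.03218 — 2 statements merged into one kernel-verified Lean document; each statement's English description precedes it below -/
import Mathlib

section
/- compute_dep is homogeneous of degree one in demand: for any scalar c ≥ 0 and nonempty list DL of nonnegative demands, compute_dep(c·DL, λ) = c·compute_dep(DL, λ), where c·DL multiplies every entry of DL by c. -/
/-- Split a list into its maximal blocks of consecutive nonzero entries,
dropping the zero entries.  `cur` is the (reversed) current block. -/
noncomputable def splitAux : List ℝ → List ℝ → List (List ℝ)
  | cur, [] => if cur = [] then [] else [cur.reverse]
  | cur, x :: xs =>
    if x = 0 then
      (if cur = [] then splitAux [] xs else cur.reverse :: splitAux [] xs)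
    else splitAux (x :: cur) xs

/-- Maximal nonempty sub-lists obtained by splitting at the zero entries. -/
noncomputable def splitAtZeros (l : List ℝ) : List (List ℝ) := splitAux [] l

theorem splitAux_length (l : List ℝ) : ∀ cur, ∀ sl ∈ splitAux cur l,
    sl.length ≤ cur.length + l.length ∧
      ((0:ℝ) ∈ l → sl.length < cur.length + l.length) := by
  induction l with
  | nil =>
    intro cur sl hsl
    simp only [splitAux] at hsl
    split at hsl
    · simp at hsl
    · simp at hsl
      subst hsl
      simp
  | cons x xs ih =>
    intro cur sl hsl
    simp only [splitAux] at hsl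
    by_cases hx : x = 0
    · rw [if_pos hx] at hsl
      have key : sl ∈ splitAux ([] : List ℝ) xs ∨ sl = cur.reverse := by
        split at hsl
        · exact Or.inl hsl
        · rcases List.mem_cons.1 hsl with h | h
          · exact Or.inr h
          · exact Or.inl h
      rcases key with h | h
      · have := ih [] sl h
        constructor
        · simp at this ⊢; omega
        · intro _; simp at this ⊢; omega
      · subst h
        constructor
        · simp
          try omega
        · intro _
          simp
          try omega
    · rw [if_neg hx] at hsl
      have := ih (x :: cur) sl hsl
      constructor
      · simp at this ⊢; omega
      · intro h0
        rcases List.mem_cons.1 h0 with h | h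
        · exact absurd h.symm hx
        · have := this.2 h
          simp at this ⊢; omega

theorem splitAtZeros_length_lt {l : List ℝ} (h0 : (0:ℝ) ∈ l) :
    ∀ sl ∈ splitAtZeros l, sl.length < l.length := by
  intro sl hsl
  have := (splitAux_length l [] sl hsl).2 h0
  simpa using this

/-- The minimum entry of a list (0 for the empty list). -/
noncomputable def minL : List ℝ → ℝ
  | [] => 0
  | x :: xs => xs.foldl min x

theorem foldl_min_mem : ∀ (ys : List ℝ) (x : ℝ), ys.foldl min x ∈ x :: ys := by
  intro ys
  induction ys with
  | nil => intro x; simp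
  | cons y ys ih =>
    intro x
    rw [List.foldl_cons]
    rcases List.mem_cons.1 (ih (min x y)) with h | h
    · rw [h]
      rcases min_choice x y with h' | h' <;> rw [h'] <;> simp
    · exact List.mem_cons_of_mem _ (List.mem_cons_of_mem _ h)

theorem minL_mem : ∀ (l : List ℝ), l ≠ [] → minL l ∈ l := by
  intro l hl
  match l with
  | x :: xs => exact foldl_min_mem xs x

theorem split_sub_minL_length_lt (DL : List ℝ) (h : DL ≠ []) :
    ∀ sl ∈ splitAtZeros (DL.map (fun x => x - minL DL)), sl.length < DL.length := by
  intro sl hsl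
  have h0 : (0:ℝ) ∈ DL.map (fun x => x - minL DL) :=
    List.mem_map.2 ⟨minL DL, minL_mem DL h, sub_self _⟩
  have := splitAtZeros_length_lt h0 sl hsl
  simpa using this

/-- The deprivation cost of a demand list: subtract the minimum `m`, charge
`m · λ(length)`, and recurse on the maximal nonzero blocks of the remainder. -/
noncomputable def computeDep (lam : ℕ → ℝ) : List ℝ → ℝ
  | [] => 0
  | x :: xs =>
    minL (x :: xs) * lam (x :: xs).length +
      (((splitAtZeros ((x :: xs).map (fun y => y - minL (x :: xs)))).attach).map
        (fun sl => computeDep lam sl.1)).sum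
termination_by l => l.length
decreasing_by
  exact split_sub_minL_length_lt _ (List.cons_ne_nil _ _) sl.1 sl.2

theorem min_mul_left' {c : ℝ} (hc : 0 ≤ c) (x y : ℝ) :
    min (c * x) (c * y) = c * min x y := by
  rcases le_total x y with h | h
  · rw [min_eq_left h, min_eq_left (mul_le_mul_of_nonneg_left h hc)]
  · rw [min_eq_right h, min_eq_right (mul_le_mul_of_nonneg_left h hc)]

theorem foldl_min_map_mul {c : ℝ} (hc : 0 ≤ c) :
    ∀ (l : List ℝ) (x : ℝ),
      (l.map (fun y => c * y)).foldl min (c * x) = c * l.foldl min x := by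
  intro l
  induction l with
  | nil => intro x; simp
  | cons a as ih =>
    intro x
    rw [List.map_cons, List.foldl_cons, List.foldl_cons, min_mul_left' hc, ih]

theorem minL_map_mul {c : ℝ} (hc : 0 ≤ c) (l : List ℝ) :
    minL (l.map (fun y => c * y)) = c * minL l := by
  cases l with
  | nil => simp [minL]
  | cons x xs => simpa [minL] using foldl_min_map_mul hc xs x

theorem splitAux_map_mul {c : ℝ} (hc : c ≠ 0) :
    ∀ (l cur : List ℝ),
      splitAux (cur.map (fun y => c * y)) (l.map (fun y => c * y)) =
        (splitAux cur l).map (List.map (fun y => c * y)) := by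
  intro l
  induction l with
  | nil =>
    intro cur
    simp only [List.map_nil, splitAux]
    by_cases h : cur = []
    · simp [h]
    · rw [if_neg h, if_neg (by simpa using h)]
      simp
  | cons x xs ih =>
    intro cur
    simp only [List.map_cons, splitAux]
    by_cases hx : x = 0
    · rw [if_pos hx, if_pos (by rw [hx, mul_zero])]
      by_cases h : cur = []
      · rw [if_pos h, if_pos (by simp [h])]
        simpa using ih []
      · rw [if_neg h, if_neg (by simpa using h)]
        have := ih []
        simp only [List.map_nil] at this
        simp [this]
    · rw [if_neg hx, if_neg (by exact mul_ne_zero hc hx)]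
      have := ih (x :: cur)
      simpa using this

theorem splitAux_nil_of_all_zero :
    ∀ (l : List ℝ), (∀ x ∈ l, x = 0) → splitAux [] l = [] := by
  intro l
  induction l with
  | nil => simp [splitAux]
  | cons x xs ih =>
    intro h
    have hx : x = 0 := h x (by simp)
    simp only [splitAux, if_pos hx, if_pos rfl]
    exact ih (fun y hy => h y (List.mem_cons_of_mem _ hy))

theorem computeDep_zero (lam : ℕ → ℝ) (l : List ℝ) (h : ∀ x ∈ l, x = 0) :
    computeDep lam l = 0 := by
  cases l with
  | nil => simp [computeDep]
  | cons x xs =>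
    have hm : minL (x :: xs) = 0 := h _ (minL_mem _ (List.cons_ne_nil _ _))
    have hmap : (x :: xs).map (fun y => y - minL (x :: xs)) =
        (x :: xs).map (fun _ => (0:ℝ)) := by
      apply List.map_congr_left
      intro a ha
      rw [h a ha, hm, sub_zero]
    rw [computeDep, hm, zero_mul, zero_add]
    rw [show splitAtZeros ((x :: xs).map (fun y => y - (0:ℝ))) = [] from by
      rw [splitAtZeros]
      refine splitAux_nil_of_all_zero _ ?_
      intro a ha
      rcases List.mem_map.1 ha with ⟨y, hy, rfl⟩
      rw [h y hy]; ring]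
    simp

theorem sum_map_attach (f : List ℝ → ℝ) (L : List (List ℝ)) :
    ((L.attach).map (fun sl => f sl.1)).sum = (L.map f).sum := by
  rw [← List.attach_map_subtype_val L, List.map_map]
  simp

theorem computeDep_hom_pos (lam : ℕ → ℝ) {c : ℝ} (hc : 0 < c) :
    ∀ n (l : List ℝ), l.length ≤ n →
      computeDep lam (l.map (fun x => c * x)) = c * computeDep lam l := by
  intro n
  induction n with
  | zero =>
    intro l hl
    have : l = [] := List.length_eq_zero_iff.1 (Nat.le_zero.1 hl)
    subst this; simp [computeDep]
  | succ n ih =>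
    intro l hl
    cases l with
    | nil => simp [computeDep]
    | cons x xs =>
      have hmap2 : ((x :: xs).map (fun y => c * y)).map
            (fun y => y - c * minL (x :: xs)) =
          ((x :: xs).map (fun y => y - minL (x :: xs))).map (fun y => c * y) := by
        simp only [List.map_map]
        apply List.map_congr_left
        intro a _
        simp [mul_sub]
      have hmap1 : (x :: xs).map (fun y => c * y) =
          (c * x) :: xs.map (fun y => c * y) := by simp
      have hlen : ((x :: xs).map (fun y => c * y)).length = (x :: xs).length := by simp
      have hsplit : splitAtZeros (((x :: xs).map (fun y => y - minL (x :: xs))).map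
            (fun y => c * y)) =
          (splitAtZeros ((x :: xs).map (fun y => y - minL (x :: xs)))).map
            (List.map (fun y => c * y)) := by
        rw [splitAtZeros, splitAtZeros]
        exact splitAux_map_mul hc.ne' _ []
      rw [hmap1, computeDep, ← hmap1, minL_map_mul hc.le, hmap2, hlen, hsplit,
        computeDep]
      rw [sum_map_attach (computeDep lam), sum_map_attach (computeDep lam),
        List.map_map, mul_add]
      congr 1
      · ring
      rw [← List.sum_map_mul_left]
      apply congrArg List.sum
      apply List.map_congr_left
      intro sl hsl
      have hlt : sl.length < (x :: xs).length :=
        split_sub_minL_length_lt (x :: xs) (List.cons_ne_nil _ _) sl hsl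
      refine ih sl ?_
      simp only [List.length_cons] at hl hlt
      omega

/-- `compute_dep` is homogeneous of degree one in demand: scaling every entry
of a nonempty nonnegative demand list by `c ≥ 0` scales the cost by `c`. -/
theorem computeDep_homogeneous (lam : ℕ → ℝ) (c : ℝ) (hc : 0 ≤ c)
    (DL : List ℝ) (hne : DL ≠ []) (hnn : ∀ x ∈ DL, 0 ≤ x) :
    computeDep lam (DL.map (fun x => c * x)) = c * computeDep lam DL := by
  rcases eq_or_lt_of_le hc with h0 | hpos
  · rw [← h0, zero_mul]
    exact computeDep_zero lam _ (by intro x hx; rcases List.mem_map.1 hx with ⟨y, _, rfl⟩; ring)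
  · exact computeDep_hom_pos lam hpos DL.length DL le_rfl
end

section
/- Under the assumption that λ is superadditive in the sense λ(s) + λ(t) ≤ λ(s + t) for all s, t ≥ 1, compute_dep on the concatenation of two lists is at least the sum of compute_dep on each list: compute_dep(DL₁ ++ DL₂, λ) ≥ compute_dep(DL₁, λ) + compute_dep(DL₂, λ), for nonempty lists DL₁, DL₂ of strictly positive demands, provided λ is also nonnegative and nondecreasing. -/
/-! Subtracting a constant `c` from every entry of a nonempty list changes its cost by exactly
`c · λ(length)`, and a nonnegative list costs the sum of the costs of its zero-free spells.
Subtract `m = minL (A ++ B) ≥ 0` from both lists: superadditivity of `λ` handles the `m`-layer,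
and afterwards the spells of `A ++ B` are those of `A` and of `B`, except that the last spell `S`
of `A` and the first spell `T` of `B` merge into `S ++ T`. Since `m` occurs in `A ++ B`, the list
`S ++ T` is shorter than `A ++ B`, so strong induction on the length gives
`dep S + dep T ≤ dep (S ++ T)`. -/

theorem List.length_add_length_lt_of_isSuffix_of_isPrefix {α : Type*} {S A T B : List α}
    (hS : S <:+ A) (hT : T <+: B) {a : α} (ha : a ∈ A ++ B) (hna : a ∉ S ++ T) :
    S.length + T.length < A.length + B.length := by
  have hSA := hS.length_le
  have hTB := hT.length_le
  refine lt_of_le_of_ne (by omega) fun h => hna ?_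
  rwa [hS.eq_of_length (by omega), hT.eq_of_length (by omega)]

theorem minL_eq_min {l : List ℝ} (hl : l ≠ []) : minL l = l.min hl := by
  cases l with
  | nil => contradiction
  | cons x xs => rfl

theorem minL_le {l : List ℝ} {y : ℝ} (hy : y ∈ l) : minL l ≤ y := by
  rw [minL_eq_min (List.ne_nil_of_mem hy)]
  exact List.min_le_of_mem hy

theorem minL_map_sub {l : List ℝ} (hl : l ≠ []) (c : ℝ) :
    minL (l.map (· - c)) = minL l - c := by
  have hl' : l.map (· - c) ≠ [] := by simpa using hl
  rw [minL_eq_min hl', List.min_eq_iff]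
  refine ⟨List.mem_map_of_mem (minL_mem l hl), ?_⟩
  simp only [List.mem_map, forall_exists_index, and_imp, forall_apply_eq_imp_iff₂]
  exact fun y hy => sub_le_sub_right (minL_le hy) c

theorem splitAux_append_zero_cons (A B : List ℝ) :
    ∀ cur, splitAux cur (A ++ 0 :: B) = splitAux cur A ++ splitAux [] B := by
  induction A with
  | nil => intro cur; by_cases hcur : cur = [] <;> simp [splitAux, hcur]
  | cons x xs ih =>
    intro cur
    by_cases hx : x = 0 <;> by_cases hcur : cur = [] <;> simp [splitAux, hx, hcur, ih]

theorem splitAtZeros_append_zero_cons (A B : List ℝ) :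
    splitAtZeros (A ++ 0 :: B) = splitAtZeros A ++ splitAtZeros B :=
  splitAux_append_zero_cons A B []

theorem splitAtZeros_nil : splitAtZeros [] = [] := by
  simp [splitAtZeros, splitAux]

theorem splitAtZeros_zero_cons (B : List ℝ) : splitAtZeros (0 :: B) = splitAtZeros B := by
  simpa [splitAtZeros_nil] using splitAtZeros_append_zero_cons [] B

theorem splitAtZeros_append_zero (A : List ℝ) : splitAtZeros (A ++ [0]) = splitAtZeros A := by
  simpa [splitAtZeros_nil] using splitAtZeros_append_zero_cons A []

theorem splitAux_of_forall_ne_zero {l : List ℝ} (hl : ∀ x ∈ l, x ≠ 0) :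
    ∀ cur, splitAux cur l = splitAux (l.reverse ++ cur) [] := by
  induction l with
  | nil => simp
  | cons x xs ih =>
    intro cur
    rw [splitAux.eq_2, if_neg (hl x List.mem_cons_self),
      ih (fun y hy => hl y (List.mem_cons_of_mem x hy))]
    simp

theorem exists_append_forall_ne_zero_suffix (A : List ℝ) :
    ∃ P S, A = P ++ S ∧ (∀ x ∈ S, x ≠ 0) ∧
      ∀ X, splitAtZeros (P ++ X) = splitAtZeros P ++ splitAtZeros X := by
  induction A using List.reverseRecOn with
  | nil => exact ⟨[], [], rfl, by simp, fun X => by simp [splitAtZeros_nil]⟩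
  | append_singleton A x ih =>
    obtain ⟨P, S, rfl, hS, hP⟩ := ih
    by_cases hx : x = 0
    · subst hx
      refine ⟨P ++ S ++ [0], [], by simp, by simp, fun X => ?_⟩
      rw [splitAtZeros_append_zero, List.append_assoc _ [0], List.singleton_append,
        splitAtZeros_append_zero_cons]
    · refine ⟨P, S ++ [x], by simp, ?_, hP⟩
      simpa [or_imp, forall_and] using ⟨hS, hx⟩

theorem exists_append_forall_ne_zero_prefix (B : List ℝ) :
    ∃ T Q, B = T ++ Q ∧ (∀ x ∈ T, x ≠ 0) ∧
      ∀ X, splitAtZeros (X ++ Q) = splitAtZeros X ++ splitAtZeros Q := by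
  induction B with
  | nil => exact ⟨[], [], rfl, by simp, fun X => by simp [splitAtZeros_nil]⟩
  | cons x B ih =>
    obtain ⟨T, Q, rfl, hT, hQ⟩ := ih
    by_cases hx : x = 0
    · subst hx
      exact ⟨[], 0 :: (T ++ Q), rfl, by simp, fun X => by
        rw [splitAtZeros_zero_cons, splitAtZeros_append_zero_cons]⟩
    · exact ⟨x :: T, Q, rfl, by simpa using ⟨hx, hT⟩, hQ⟩

noncomputable def computeDepBlocks (lam : ℕ → ℝ) (l : List ℝ) : ℝ :=
  ((splitAtZeros l).map (computeDep lam)).sum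

theorem computeDep_nil (lam : ℕ → ℝ) : computeDep lam [] = 0 := by
  rw [computeDep]

theorem computeDep_of_ne_nil (lam : ℕ → ℝ) {l : List ℝ} (hl : l ≠ []) :
    computeDep lam l = minL l * lam l.length + computeDepBlocks lam (l.map (· - minL l)) := by
  obtain ⟨x, xs, rfl⟩ := List.exists_cons_of_ne_nil hl
  rw [computeDep, computeDepBlocks, List.map_attach_eq_pmap, List.pmap_eq_map]

theorem computeDep_eq_mul_add_computeDep_map_sub (lam : ℕ → ℝ) {l : List ℝ} (hl : l ≠ [])
    (c : ℝ) : computeDep lam l = c * lam l.length + computeDep lam (l.map (· - c)) := by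
  have hl' : l.map (· - c) ≠ [] := by simpa using hl
  rw [computeDep_of_ne_nil lam hl, computeDep_of_ne_nil lam hl', minL_map_sub hl,
    List.length_map, List.map_map]
  have hcomp : (· - (minL l - c)) ∘ (· - c) = (· - minL l) := by
    funext y
    simp only [Function.comp_apply]
    ring
  rw [hcomp]
  ring

theorem computeDepBlocks_of_forall_ne_zero (lam : ℕ → ℝ) {l : List ℝ}
    (hl : ∀ x ∈ l, x ≠ 0) : computeDepBlocks lam l = computeDep lam l := by
  rw [computeDepBlocks, splitAtZeros, splitAux_of_forall_ne_zero hl]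
  by_cases h : l = [] <;> simp [splitAux, h, computeDep_nil]

theorem computeDep_eq_computeDepBlocks_of_nonneg (lam : ℕ → ℝ) {l : List ℝ}
    (hl : ∀ x ∈ l, 0 ≤ x) : computeDep lam l = computeDepBlocks lam l := by
  by_cases h0 : (0 : ℝ) ∈ l
  · have hmin : minL l = 0 := le_antisymm (minL_le h0) (hl _ (minL_mem l (List.ne_nil_of_mem h0)))
    simp [computeDep_of_ne_nil lam (List.ne_nil_of_mem h0), hmin]
  · exact (computeDepBlocks_of_forall_ne_zero lam fun x hx hx0 => h0 (hx0 ▸ hx)).symm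

theorem exists_computeDepBlocks_append (lam : ℕ → ℝ) (A B : List ℝ) :
    ∃ S T, S <:+ A ∧ T <+: B ∧ (∀ x ∈ S, x ≠ 0) ∧ (∀ x ∈ T, x ≠ 0) ∧
      computeDepBlocks lam A + computeDepBlocks lam B + computeDep lam (S ++ T) =
        computeDepBlocks lam (A ++ B) + computeDep lam S + computeDep lam T := by
  obtain ⟨P, S, rfl, hS, hP⟩ := exists_append_forall_ne_zero_suffix A
  obtain ⟨T, Q, rfl, hT, hQ⟩ := exists_append_forall_ne_zero_prefix B
  have hST : ∀ x ∈ S ++ T, x ≠ 0 := by simpa [or_imp, forall_and] using ⟨hS, hT⟩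
  refine ⟨S, T, List.suffix_append P S, List.prefix_append T Q, hS, hT, ?_⟩
  have hP' : ∀ X, computeDepBlocks lam (P ++ X) = computeDepBlocks lam P + computeDepBlocks lam X :=
    fun X => by simp [computeDepBlocks, hP]
  have hQ' : ∀ X, computeDepBlocks lam (X ++ Q) = computeDepBlocks lam X + computeDepBlocks lam Q :=
    fun X => by simp [computeDepBlocks, hQ]
  rw [show P ++ S ++ (T ++ Q) = P ++ ((S ++ T) ++ Q) by simp, hP', hP', hQ', hQ',
    computeDepBlocks_of_forall_ne_zero lam hS, computeDepBlocks_of_forall_ne_zero lam hT,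
    computeDepBlocks_of_forall_ne_zero lam hST]
  ring

theorem computeDep_add_computeDep_le_append (lam : ℕ → ℝ)
    (hsuper : ∀ s t : ℕ, 1 ≤ s → 1 ≤ t → lam s + lam t ≤ lam (s + t))
    (A B : List ℝ) (hA : ∀ x ∈ A, 0 ≤ x) (hB : ∀ x ∈ B, 0 ≤ x) :
    computeDep lam A + computeDep lam B ≤ computeDep lam (A ++ B) := by
  induction hn : A.length + B.length using Nat.strong_induction_on generalizing A B with
  | _ n ih =>
  rcases eq_or_ne A [] with rfl | hA0
  · simp [computeDep_nil]
  rcases eq_or_ne B [] with rfl | hB0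
  · simp [computeDep_nil]
  have hAB0 : A ++ B ≠ [] := by simp [hA0]
  set m := minL (A ++ B)
  have hm : 0 ≤ m := (List.mem_append.1 (minL_mem _ hAB0)).elim (hA m) (hB m)
  have hnn : ∀ x ∈ (A ++ B).map (· - m), 0 ≤ x := by
    intro x hx
    obtain ⟨y, hy, rfl⟩ := List.mem_map.1 hx
    exact sub_nonneg.2 (minL_le hy)
  have hshift : ∀ l, l ≠ [] → l ⊆ A ++ B →
      computeDep lam l = m * lam l.length + computeDepBlocks lam (l.map (· - m)) := by
    intro l hl hsub
    rw [computeDep_eq_mul_add_computeDep_map_sub lam hl m,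
      computeDep_eq_computeDepBlocks_of_nonneg lam fun x hx => hnn x (List.map_subset _ hsub hx)]
  obtain ⟨S, T, hSA, hTB, hS, hT, hblocks⟩ :=
    exists_computeDepBlocks_append lam (A.map (· - m)) (B.map (· - m))
  rw [← List.map_append] at hblocks
  have hlen : S.length + T.length < n := by
    have hzero : (0 : ℝ) ∈ A.map (· - m) ++ B.map (· - m) := by
      rw [← List.map_append]
      exact List.mem_map.2 ⟨m, minL_mem _ hAB0, sub_self m⟩
    have hzero' : (0 : ℝ) ∉ S ++ T := by
      simpa using ⟨fun h => hS 0 h rfl, fun h => hT 0 h rfl⟩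
    simpa [← hn] using List.length_add_length_lt_of_isSuffix_of_isPrefix hSA hTB hzero hzero'
  have hST := ih _ hlen S T
    (fun x hx => hnn x (List.map_append ▸ List.mem_append_left _ (hSA.subset hx)))
    (fun x hx => hnn x (List.map_append ▸ List.mem_append_right _ (hTB.subset hx))) rfl
  have hlam : m * (lam A.length + lam B.length) ≤ m * lam (A.length + B.length) :=
    mul_le_mul_of_nonneg_left (hsuper _ _ (List.length_pos_iff.2 hA0)
      (List.length_pos_iff.2 hB0)) hm
  rw [hshift A hA0 (List.subset_append_left A B), hshift B hB0 (List.subset_append_right A B),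
    hshift _ hAB0 (List.Subset.refl _), List.length_append]
  linarith

theorem computeDep_superadditive_general (lam : ℕ → ℝ)
    (hsuper : ∀ s t : ℕ, 1 ≤ s → 1 ≤ t → lam s + lam t ≤ lam (s + t))
    (DL1 DL2 : List ℝ)
    (hp1 : ∀ x ∈ DL1, 0 < x) (hp2 : ∀ x ∈ DL2, 0 < x) :
    computeDep lam DL1 + computeDep lam DL2 ≤ computeDep lam (DL1 ++ DL2) :=
  computeDep_add_computeDep_le_append lam hsuper DL1 DL2 (fun x hx => (hp1 x hx).le)
    (fun x hx => (hp2 x hx).le)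

/-- If `λ` is nonnegative, nondecreasing, and superadditive
(`λ(s) + λ(t) ≤ λ(s+t)` for `s, t ≥ 1`), then `compute_dep` on the
concatenation of two nonempty lists of strictly positive demands is at least
the sum of `compute_dep` on each list. -/
theorem computeDep_superadditive (lam : ℕ → ℝ)
    (hnn : ∀ n, 0 ≤ lam n) (hmono : Monotone lam)
    (hsuper : ∀ s t : ℕ, 1 ≤ s → 1 ≤ t → lam s + lam t ≤ lam (s + t))
    (DL1 DL2 : List ℝ) (h1 : DL1 ≠ []) (h2 : DL2 ≠ [])
    (hp1 : ∀ x ∈ DL1, 0 < x) (hp2 : ∀ x ∈ DL2, 0 < x) :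
    computeDep lam DL1 + computeDep lam DL2 ≤ computeDep lam (DL1 ++ DL2) :=
  computeDep_superadditive_general lam hsuper DL1 DL2 hp1 hp2
end
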